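/- Let n ≥ 3 and let (1 | m_1, …, m_n) be a normalized reduced class with m_n > 0. If m_1 + ⋯ + m_n < 3 (equivalently, the class pairs positively with −K), then m_1² + ⋯ + m_n² < 1 (equivalently, the class has positive square). (Key inclusion in the proof of Lemma 2.14: 𝓡_n ∩ {d·(−K) > 0} ⊆ {d·d > 0}.) -/

import Mathlib

/-!
Write `a ≥ b ≥ c` for the three largest multiplicities. Every other `m_i` lies in `(0, c]`, so
`m_i² ≤ c m_i`, and the sum of squares is at most `a² + b² + c (Σ m_i - a - b)`, which is
`< a² + b² + c (3 - a - b)` when `Σ m_i < 3`. This last quantity is at most `1` on the simplex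
`0 ≤ c ≤ b ≤ a`, `a + b + c ≤ 1`: with `b = c + q`, `a = b + p` and `r = 1 - a - b - c`, the
difference `1 - (a² + b² + c (3 - a - b))`, homogenized by `1 = 3c + 2q + p + r`, is a polynomial
with nonnegative coefficients in `c, p, q, r`.
-/

open Finset

lemma sum_sq_le_mul_sum {ι R : Type*} [CommSemiring R] [PartialOrder R] [IsOrderedRing R]
    (s : Finset ι) {x : ι → R} {c : R} (hx₀ : ∀ i ∈ s, 0 ≤ x i) (hxc : ∀ i ∈ s, x i ≤ c) :
    ∑ i ∈ s, x i ^ 2 ≤ c * ∑ i ∈ s, x i := by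
  rw [mul_sum]
  exact sum_le_sum fun i hi =>
    (sq (x i)).trans_le (mul_le_mul_of_nonneg_right (hxc i hi) (hx₀ i hi))

lemma Antitone.sum_sq_le {k : ℕ} {m : Fin (k + 3) → ℝ} (hm : Antitone m) (hm₀ : ∀ i, 0 ≤ m i) :
    ∑ i, m i ^ 2 ≤ m 0 ^ 2 + m 1 ^ 2 + m 2 * (∑ i, m i - m 0 - m 1) := by
  have hsplit (f : Fin (k + 3) → ℝ) : ∑ i, f i = f 0 + f 1 + ∑ i : Fin (k + 1), f i.succ.succ := by
    simp only [Fin.sum_univ_succ, Fin.succ_zero_eq_one', add_assoc]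
  have htail : ∑ i : Fin (k + 1), m i.succ.succ ^ 2 ≤ m 2 * ∑ i : Fin (k + 1), m i.succ.succ :=
    sum_sq_le_mul_sum univ (fun i _ => hm₀ _)
      (fun i _ => hm (by simp [Fin.le_def, Nat.mod_eq_of_lt]))
  rw [hsplit, hsplit m]
  linarith

lemma sq_add_sq_add_mul_three_sub_le_one {a b c : ℝ} (hba : b ≤ a) (hcb : c ≤ b) (hc : 0 ≤ c)
    (habc : a + b + c ≤ 1) : a ^ 2 + b ^ 2 + c * (3 - a - b) ≤ 1 := by
  obtain ⟨p, hp, rfl⟩ : ∃ p, 0 ≤ p ∧ a = b + p := ⟨a - b, by linarith, by ring⟩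
  obtain ⟨q, hq, rfl⟩ : ∃ q, 0 ≤ q ∧ b = c + q := ⟨b - c, by linarith, by ring⟩
  obtain ⟨r, hr, hsum⟩ : ∃ r, 0 ≤ r ∧ 3 * c + 2 * q + p + r = 1 :=
    ⟨1 - 3 * c - 2 * q - p, by linarith, by ring⟩
  have hE : 0 ≤ 4 * c * q + 2 * c * p + 3 * c * r + 2 * q ^ 2 + r ^ 2 + 2 * q * p + 4 * q * r
      + 2 * p * r := by
    positivity
  linear_combination hE + (1 + 2 * q + p + r) * hsum

theorem reduced_c1_positive_implies_positive_square
    (n : ℕ) (hn : 3 ≤ n) (m : Fin n → ℝ)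
    (hmono : Antitone m)
    (hlast : 0 < m ⟨n - 1, by omega⟩)
    (hred : m ⟨0, by omega⟩ + m ⟨1, by omega⟩ + m ⟨2, by omega⟩ ≤ 1)
    (hK : ∑ i, m i < 3) :
    ∑ i, (m i) ^ 2 < 1 := by
  obtain ⟨k, rfl⟩ : ∃ k, n = k + 3 := ⟨n - 3, by omega⟩
  have hpos : ∀ i, 0 < m i := fun i => hlast.trans_le (hmono (Fin.le_last i))
  have hsq := hmono.sum_sq_le fun i => (hpos i).le
  have hkey := sq_add_sq_add_mul_three_sub_le_one (hmono (Fin.zero_le 1))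
    (hmono (by simp [Fin.le_def, Nat.mod_eq_of_lt])) (hpos 2).le hred
  have hstrict : m 2 * (∑ i, m i - m 0 - m 1) < m 2 * (3 - m 0 - m 1) := by gcongr; exact hpos 2
  linarith
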